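/- arXiv:1204.0383 — 4 statements merged into one kernel-verified Lean document; each statement's English description precedes it below -/
import Mathlib

section
/- Let R_1 ⊆ (K^×)^3 be a system of representatives for the orbits of (K^×)^3 under the diagonal scalar-multiplication action of F, and let R_2 ⊆ (K^×)^6 be a system of representatives for the quotient group (K^×)^6 / H. Then R := R_1 × R_2 ⊆ (K^×)^9 is a system of representatives for the orbits of (K^×)^9 under the action ⊙ of F^7. -/
open NumberField

/-- The subgroup `F` of `K^×` generated by (the images of) a fixed system of fundamental
units of `O_K`; here we take Mathlib's fixed fundamental system `fundSystem K`. -/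
noncomputable def unitsF (K : Type) [Field K] [NumberField K] : Subgroup Kˣ :=
  Subgroup.map (Units.map (algebraMap (RingOfIntegers K) K).toMonoidHom)
    (Subgroup.closure (Set.range (NumberField.Units.fundSystem K)))

/- Points of `(K^×)⁹` are written as pairs
`((y₁, y₂, y₃), (y₁₂, y₂₁, y₂₃, y₃₂, y₃₁, y₁₃))`. -/

/-- The subgroup(-set) `H` of `(K^×)⁶` (coordinates `(α₁₂, α₂₁, α₂₃, α₃₂, α₃₁, α₁₃)`):
all tuples in `F⁶` for which `α₁₂ α₂₁² α₂₃ α₃₂² α₃₁ α₁₃²` is a cube in `F`. -/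
def Hset (K : Type) [Field K] [NumberField K] : Set (Kˣ × Kˣ × Kˣ × Kˣ × Kˣ × Kˣ) :=
  {α | α.1 ∈ unitsF K ∧ α.2.1 ∈ unitsF K ∧ α.2.2.1 ∈ unitsF K ∧ α.2.2.2.1 ∈ unitsF K ∧
    α.2.2.2.2.1 ∈ unitsF K ∧ α.2.2.2.2.2 ∈ unitsF K ∧
    ∃ ξ ∈ unitsF K,
      α.1 * α.2.1 ^ 2 * α.2.2.1 * α.2.2.2.1 ^ 2 * α.2.2.2.2.1 * α.2.2.2.2.2 ^ 2 = ξ ^ 3}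

/-- The action `⊙` of an element `(ζ, ζ₁, ζ₂, ζ₃, ζ₂₁, ζ₃₂, ζ₁₃)` of `F⁷` on a point
`((y₁,y₂,y₃),(y₁₂,y₂₁,y₂₃,y₃₂,y₃₁,y₁₃))` of `(K^×)⁹`. -/
def act (K : Type) [Field K] (ζ ζ₁ ζ₂ ζ₃ ζ₂₁ ζ₃₂ ζ₁₃ : Kˣ)
    (y : (Kˣ × Kˣ × Kˣ) × (Kˣ × Kˣ × Kˣ × Kˣ × Kˣ × Kˣ)) :
    (Kˣ × Kˣ × Kˣ) × (Kˣ × Kˣ × Kˣ × Kˣ × Kˣ × Kˣ) :=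
  ((ζ₁ * y.1.1, ζ₂ * y.1.2.1, ζ₃ * y.1.2.2),
    (ζ * (ζ₂ ^ 2)⁻¹ * ζ₃₂⁻¹ * ζ₁⁻¹ * ζ₂₁⁻¹ * y.2.1,
     ζ₂₁ * y.2.2.1,
     ζ * (ζ₃ ^ 2)⁻¹ * ζ₁₃⁻¹ * ζ₂⁻¹ * ζ₃₂⁻¹ * y.2.2.2.1,
     ζ₃₂ * y.2.2.2.2.1,
     ζ * (ζ₁ ^ 2)⁻¹ * ζ₂₁⁻¹ * ζ₃⁻¹ * ζ₁₃⁻¹ * y.2.2.2.2.2.1,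
     ζ₁₃ * y.2.2.2.2.2.2))


/-!
The action `⊙` is left multiplication by the subgroup `M = F⁷ ⊙ 1` of
`(K^×)⁹ = (K^×)³ × (K^×)⁶`. For any subgroup `M` of a product `G₁ × G₂`, a transversal of the
fibre `{a | (a, 1) ∈ M}` times a transversal of the projection of `M` to `G₂` is a transversal
of `M`. Here the projection is `H`: the weight `α₁₂ α₂₁² α₂₃ α₃₂² α₃₁ α₁₃²` of `ζ ⊙ 1` is
`(ζ / ζ₁ζ₂ζ₃)³`, and every element of `H` lifts. The fibre is the diagonal of `F`:
`((ζ₁, ζ₂, ζ₃), 1) ∈ M` forces `ζ₁ζ₂² = ζ₂ζ₃² = ζ₃ζ₁²`, hence `ζ₁³ = ζ₃³`, and `F` is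
torsion-free by Dirichlet's unit theorem.
-/

namespace NumberField.Units

variable (K : Type*) [Field K] [NumberField K]

theorem closure_fundSystem_inf_torsion_eq_bot :
    Subgroup.closure (Set.range (fundSystem K)) ⊓ torsion K = ⊥ := by
  refine eq_bot_iff.mpr fun x ⟨hcl, htors⟩ ↦ ?_
  obtain ⟨a, ha⟩ := Subgroup.exists_of_mem_closure_range _ _ hcl
  have h := (exist_unique_eq_mul_prod K x).unique (y₁ := (⟨x, htors⟩, 0)) (y₂ := (1, a))
    (by simp) (by simpa using ha)
  simpa using congrArg (fun p ↦ (p.1 : (𝓞 K)ˣ)) h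

instance : IsMulTorsionFree (Subgroup.closure (Set.range (fundSystem K))) := by
  refine isMulTorsionFree_iff_not_isOfFinOrder.mpr fun a ha hfin ↦ ha (Subtype.ext ?_)
  have htors : (a : (𝓞 K)ˣ) ∈ torsion K :=
    (CommGroup.mem_torsion _).mpr ((Subgroup.subtype _).isOfFinOrder hfin)
  have h := Subgroup.mem_inf.mpr ⟨a.2, htors⟩
  rwa [closure_fundSystem_inf_torsion_eq_bot, Subgroup.mem_bot] at h

end NumberField.Units

instance (K : Type) [Field K] [NumberField K] : IsMulTorsionFree (unitsF K) :=
  Function.Injective.isMulTorsionFree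
    (Subgroup.equivMapOfInjective _ _
      (Units.map_injective RingOfIntegers.coe_injective)).symm.toMonoidHom
    (MulEquiv.injective _)

theorem eq_of_mul_sq_eq_of_mul_sq_eq {G : Type*} [CommGroup G] [IsMulTorsionFree G]
    {a b c : G} (hab : a * b ^ 2 = b * c ^ 2) (hbc : b * c ^ 2 = c * a ^ 2) :
    a = c ∧ b = c := by
  have hab' : a * b = c ^ 2 :=
    mul_right_cancel (b := b) (by rw [mul_assoc, ← sq, hab, mul_comm])
  have hbc' : b * c = a ^ 2 :=
    mul_right_cancel (b := c) (by rw [mul_assoc, ← sq, hbc, mul_comm])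
  have hac : a = c := IsMulTorsionFree.pow_left_injective three_ne_zero <| by
    calc a ^ 3 = a * (b * c) := by rw [hbc', pow_succ']
      _ = c * (a * b) := by rw [mul_comm b c, mul_left_comm]
      _ = c ^ 3 := by rw [hab', ← pow_succ']
  subst hac
  exact ⟨rfl, mul_left_cancel (hab'.trans (sq a))⟩

namespace Subgroup

variable {G : Type*} [Group G]

theorem isComplement_iff_existsUnique_eq_mul {N : Subgroup G} {R : Set G} :
    IsComplement (N : Set G) R ↔ ∀ y, ∃! z, z ∈ R ∧ ∃ n ∈ N, z = n * y := by
  have hmem (y z : G) : (∃ n ∈ N, z = n * y) ↔ y * z⁻¹ ∈ N :=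
    ⟨by rintro ⟨n, hn, rfl⟩; simpa using N.inv_mem hn,
     fun h ↦ ⟨(y * z⁻¹)⁻¹, N.inv_mem h, by group⟩⟩
  simp only [isComplement_iff_existsUnique_mul_inv_mem, hmem, SetLike.mem_coe]
  refine forall_congr' fun y ↦ ⟨fun ⟨t, ht, hu⟩ ↦ ?_, fun ⟨z, hz, hu⟩ ↦ ?_⟩
  · exact ⟨t, ⟨t.2, ht⟩, fun z hz ↦ congrArg Subtype.val (hu ⟨z, hz.1⟩ hz.2)⟩
  · exact ⟨⟨z, hz.1⟩, hz.2, fun t ht ↦ Subtype.ext (hu t ⟨t.2, ht⟩)⟩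

theorem isComplement_prod_of_comap_inl_of_map_snd {G₁ G₂ : Type*} [Group G₁] [Group G₂]
    {M : Subgroup (G₁ × G₂)} {R₁ : Set G₁} {R₂ : Set G₂}
    (h₁ : IsComplement (M.comap (MonoidHom.inl G₁ G₂) : Set G₁) R₁)
    (h₂ : IsComplement (M.map (MonoidHom.snd G₁ G₂) : Set G₂) R₂) :
    IsComplement (M : Set (G₁ × G₂)) (R₁ ×ˢ R₂) := by
  rw [isComplement_iff_existsUnique_eq_mul] at h₁ h₂ ⊢
  rintro ⟨y₁, y₂⟩
  obtain ⟨_, ⟨hz₂, _, ⟨m, hm, rfl⟩, rfl⟩, huniq₂⟩ := h₂ y₂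
  obtain ⟨_, ⟨hz₁, n, hn, rfl⟩, huniq₁⟩ := h₁ (m.1 * y₁)
  refine ⟨(n * (m.1 * y₁), m.2 * y₂), ⟨⟨hz₁, hz₂⟩, (n, 1) * m, M.mul_mem hn hm, ?_⟩, ?_⟩
  · ext <;> simp [mul_assoc]
  rintro ⟨w₁, w₂⟩ ⟨⟨hw₁, hw₂⟩, k, hk, hw⟩
  simp only [Prod.ext_iff, Prod.fst_mul, Prod.snd_mul] at hw
  have hkm₂ : k.2 = m.2 :=
    mul_right_cancel (hw.2.symm.trans (huniq₂ w₂ ⟨hw₂, k.2, mem_map_of_mem _ hk, hw.2⟩))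
  have hkm : k.1 * m.1⁻¹ ∈ M.comap (MonoidHom.inl G₁ G₂) := by
    have : MonoidHom.inl G₁ G₂ (k.1 * m.1⁻¹) = k * m⁻¹ := by ext <;> simp [hkm₂]
    rw [mem_comap, this]
    exact M.mul_mem hk (M.inv_mem hm)
  ext
  · exact huniq₁ w₁ ⟨hw₁, _, hkm, by rw [hw.1]; group⟩
  · exact hw.2.trans (congrArg (· * y₂) hkm₂)

end Subgroup

section act

variable {K : Type} [Field K]

theorem act_eq_mul (ζ ζ₁ ζ₂ ζ₃ ζ₂₁ ζ₃₂ ζ₁₃ : Kˣ)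
    (y : (Kˣ × Kˣ × Kˣ) × (Kˣ × Kˣ × Kˣ × Kˣ × Kˣ × Kˣ)) :
    act K ζ ζ₁ ζ₂ ζ₃ ζ₂₁ ζ₃₂ ζ₁₃ y = act K ζ ζ₁ ζ₂ ζ₃ ζ₂₁ ζ₃₂ ζ₁₃ 1 * y := by
  simp only [act, Prod.fst_one, Prod.snd_one, mul_one]
  rfl

theorem act_one_mul_act_one (ζ ζ₁ ζ₂ ζ₃ ζ₂₁ ζ₃₂ ζ₁₃ ζ' ζ₁' ζ₂' ζ₃' ζ₂₁' ζ₃₂' ζ₁₃' : Kˣ) :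
    act K ζ ζ₁ ζ₂ ζ₃ ζ₂₁ ζ₃₂ ζ₁₃ 1 * act K ζ' ζ₁' ζ₂' ζ₃' ζ₂₁' ζ₃₂' ζ₁₃' 1 =
      act K (ζ * ζ') (ζ₁ * ζ₁') (ζ₂ * ζ₂') (ζ₃ * ζ₃') (ζ₂₁ * ζ₂₁') (ζ₃₂ * ζ₃₂') (ζ₁₃ * ζ₁₃') 1 := by
  simp only [act, Prod.fst_one, Prod.snd_one, mul_one, Prod.mk_mul_mk, mul_pow, mul_inv]
  congr 2 <;> ac_rfl

theorem act_one_one : act K 1 1 1 1 1 1 1 1 = 1 := by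
  simp [act]

end act

def actSubgroup (K : Type) [Field K] [NumberField K] :
    Subgroup ((Kˣ × Kˣ × Kˣ) × (Kˣ × Kˣ × Kˣ × Kˣ × Kˣ × Kˣ)) where
  carrier := {m | ∃ ζ ∈ unitsF K, ∃ ζ₁ ∈ unitsF K, ∃ ζ₂ ∈ unitsF K, ∃ ζ₃ ∈ unitsF K,
    ∃ ζ₂₁ ∈ unitsF K, ∃ ζ₃₂ ∈ unitsF K, ∃ ζ₁₃ ∈ unitsF K, m = act K ζ ζ₁ ζ₂ ζ₃ ζ₂₁ ζ₃₂ ζ₁₃ 1}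
  mul_mem' := by
    rintro _ _ ⟨ζ, hζ, ζ₁, hζ₁, ζ₂, hζ₂, ζ₃, hζ₃, ζ₂₁, hζ₂₁, ζ₃₂, hζ₃₂, ζ₁₃, hζ₁₃, rfl⟩
      ⟨ζ', hζ', ζ₁', hζ₁', ζ₂', hζ₂', ζ₃', hζ₃', ζ₂₁', hζ₂₁', ζ₃₂', hζ₃₂', ζ₁₃', hζ₁₃', rfl⟩
    exact ⟨_, mul_mem hζ hζ', _, mul_mem hζ₁ hζ₁', _, mul_mem hζ₂ hζ₂', _, mul_mem hζ₃ hζ₃',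
      _, mul_mem hζ₂₁ hζ₂₁', _, mul_mem hζ₃₂ hζ₃₂', _, mul_mem hζ₁₃ hζ₁₃',
      act_one_mul_act_one ..⟩
  one_mem' := ⟨1, one_mem _, 1, one_mem _, 1, one_mem _, 1, one_mem _, 1, one_mem _,
    1, one_mem _, 1, one_mem _, act_one_one.symm⟩
  inv_mem' := by
    rintro _ ⟨ζ, hζ, ζ₁, hζ₁, ζ₂, hζ₂, ζ₃, hζ₃, ζ₂₁, hζ₂₁, ζ₃₂, hζ₃₂, ζ₁₃, hζ₁₃, rfl⟩
    refine ⟨_, inv_mem hζ, _, inv_mem hζ₁, _, inv_mem hζ₂, _, inv_mem hζ₃, _, inv_mem hζ₂₁,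
      _, inv_mem hζ₃₂, _, inv_mem hζ₁₃, (eq_inv_of_mul_eq_one_left ?_).symm⟩
    rw [act_one_mul_act_one]
    simpa using act_one_one

section

variable {K : Type} [Field K] [NumberField K]

theorem mem_comap_inl_actSubgroup {n : Kˣ × Kˣ × Kˣ} :
    n ∈ (actSubgroup K).comap (MonoidHom.inl _ _) ↔ ∃ ν ∈ unitsF K, n = (ν, ν, ν) := by
  constructor
  · rintro ⟨ζ, -, ζ₁, hζ₁, ζ₂, hζ₂, ζ₃, hζ₃, ζ₂₁, -, ζ₃₂, -, ζ₁₃, -, h⟩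
    simp only [act, MonoidHom.inl_apply, Prod.mk.injEq, Prod.fst_one, Prod.snd_one,
      mul_one] at h
    obtain ⟨rfl, h⟩ := h
    simp only [eq_comm (a := (1 : Kˣ × Kˣ × Kˣ × Kˣ × Kˣ × Kˣ)), Prod.mk_eq_one] at h
    obtain ⟨h₁₂, rfl, h₂₃, rfl, h₃₁, rfl⟩ := h
    simp only [inv_one, mul_one, one_mul, mul_inv_eq_iff_eq_mul] at h₁₂ h₂₃ h₃₁
    have key := eq_of_mul_sq_eq_of_mul_sq_eq (a := (⟨ζ₁, hζ₁⟩ : unitsF K)) (b := ⟨ζ₂, hζ₂⟩)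
      (c := ⟨ζ₃, hζ₃⟩) (Subtype.ext (h₁₂.symm.trans h₂₃)) (Subtype.ext (h₂₃.symm.trans h₃₁))
    simp only [Subtype.mk.injEq] at key
    exact ⟨ζ₃, hζ₃, by rw [key.1, key.2]⟩
  · rintro ⟨ν, hν, rfl⟩
    exact ⟨ν ^ 3, pow_mem hν 3, ν, hν, ν, hν, ν, hν, 1, one_mem _, 1, one_mem _, 1, one_mem _,
      by ext <;> simp [act, pow_succ]⟩

theorem coe_map_snd_actSubgroup :
    ((actSubgroup K).map (MonoidHom.snd _ _) : Set (Kˣ × Kˣ × Kˣ × Kˣ × Kˣ × Kˣ)) =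
      Hset K := by
  ext ⟨α₁₂, α₂₁, α₂₃, α₃₂, α₃₁, α₁₃⟩
  constructor
  · rintro ⟨_, ⟨ζ, hζ, ζ₁, hζ₁, ζ₂, hζ₂, ζ₃, hζ₃, ζ₂₁, hζ₂₁, ζ₃₂, hζ₃₂, ζ₁₃, hζ₁₃, rfl⟩, h⟩
    simp only [act, MonoidHom.coe_snd, Prod.fst_one, Prod.snd_one, mul_one, Prod.mk.injEq] at h
    obtain ⟨rfl, rfl, rfl, rfl, rfl, rfl⟩ := h
    refine ⟨by apply_rules [mul_mem, inv_mem, pow_mem], hζ₂₁,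
      by apply_rules [mul_mem, inv_mem, pow_mem], hζ₃₂,
      by apply_rules [mul_mem, inv_mem, pow_mem], hζ₁₃,
      ζ * (ζ₁ * ζ₂ * ζ₃)⁻¹, by apply_rules [mul_mem, inv_mem, pow_mem], ?_⟩
    ext
    simp only [Units.val_mul, Units.val_pow_eq_pow_val, Units.val_inv_eq_inv_val]
    field_simp
  · rintro ⟨h₁₂, h₂₁, -, h₃₂, h₃₁, h₁₃, ξ, hξ, hcube⟩
    -- With `p = α₁₂α₂₁α₃₂` and `r = α₃₁α₂₁α₁₃`, the lift is `ζ = pξ/r`, `ζ₁ = ξ/r`, `ζ₂ = 1`,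
    -- `ζ₃ = p/ξ`; only its `α₂₃`-coordinate uses `ξ³ = pr α₂₃ α₃₂ α₁₃`.
    have hp : α₁₂ * α₂₁ * α₃₂ ∈ unitsF K := by apply_rules [mul_mem]
    have hr : (α₃₁ * α₂₁ * α₁₃)⁻¹ ∈ unitsF K := by apply_rules [mul_mem, inv_mem]
    refine ⟨_, ⟨_, mul_mem (mul_mem hp hξ) hr, _, mul_mem hξ hr, 1, one_mem _,
      _, mul_mem hp (inv_mem hξ), α₂₁, h₂₁, α₃₂, h₃₂, α₁₃, h₁₃, rfl⟩, ?_⟩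
    simp only [act, MonoidHom.coe_snd, Prod.fst_one, Prod.snd_one, mul_one, Prod.mk.injEq,
      Units.ext_iff, Units.val_mul, Units.val_pow_eq_pow_val, Units.val_inv_eq_inv_val,
      Units.val_one, true_and, and_true] at hcube ⊢
    refine ⟨?_, ?_, ?_⟩ <;> field_simp
    linear_combination -hcube

theorem exists_act_eq_iff (y z : (Kˣ × Kˣ × Kˣ) × (Kˣ × Kˣ × Kˣ × Kˣ × Kˣ × Kˣ)) :
    (∃ ζ ∈ unitsF K, ∃ ζ₁ ∈ unitsF K, ∃ ζ₂ ∈ unitsF K, ∃ ζ₃ ∈ unitsF K,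
      ∃ ζ₂₁ ∈ unitsF K, ∃ ζ₃₂ ∈ unitsF K, ∃ ζ₁₃ ∈ unitsF K,
        z = act K ζ ζ₁ ζ₂ ζ₃ ζ₂₁ ζ₃₂ ζ₁₃ y) ↔ ∃ m ∈ actSubgroup K, z = m * y := by
  constructor
  · rintro ⟨ζ, hζ, ζ₁, hζ₁, ζ₂, hζ₂, ζ₃, hζ₃, ζ₂₁, hζ₂₁, ζ₃₂, hζ₃₂, ζ₁₃, hζ₁₃, rfl⟩
    exact ⟨_, ⟨ζ, hζ, ζ₁, hζ₁, ζ₂, hζ₂, ζ₃, hζ₃, ζ₂₁, hζ₂₁, ζ₃₂, hζ₃₂, ζ₁₃, hζ₁₃, rfl⟩,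
      act_eq_mul ..⟩
  · rintro ⟨_, ⟨ζ, hζ, ζ₁, hζ₁, ζ₂, hζ₂, ζ₃, hζ₃, ζ₂₁, hζ₂₁, ζ₃₂, hζ₃₂, ζ₁₃, hζ₁₃, rfl⟩, rfl⟩
    exact ⟨ζ, hζ, ζ₁, hζ₁, ζ₂, hζ₂, ζ₃, hζ₃, ζ₂₁, hζ₂₁, ζ₃₂, hζ₃₂, ζ₁₃, hζ₁₃,
      (act_eq_mul ..).symm⟩

end

/-- Lemma 2.4: if `R₁` is a system of representatives for the orbits of
`(K^×)³` under the diagonal scalar multiplication action of `F` and `R₂` is a system of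
representatives for `(K^×)⁶/H`, then `R₁ × R₂` is a system of representatives for the
orbits of `(K^×)⁹` under the action `⊙` of `F⁷`. -/
theorem stmt5 (K : Type) [Field K] [NumberField K]
    (R₁ : Set (Kˣ × Kˣ × Kˣ)) (R₂ : Set (Kˣ × Kˣ × Kˣ × Kˣ × Kˣ × Kˣ))
    (hR₁ : ∀ y : Kˣ × Kˣ × Kˣ, ∃! z, z ∈ R₁ ∧
      ∃ ζ ∈ unitsF K, z = (ζ * y.1, ζ * y.2.1, ζ * y.2.2))
    (hR₂ : ∀ y : Kˣ × Kˣ × Kˣ × Kˣ × Kˣ × Kˣ, ∃! z, z ∈ R₂ ∧ ∃ h ∈ Hset K, z = h * y) :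
    ∀ y : (Kˣ × Kˣ × Kˣ) × (Kˣ × Kˣ × Kˣ × Kˣ × Kˣ × Kˣ),
      ∃! z, z ∈ R₁ ×ˢ R₂ ∧
        ∃ ζ ∈ unitsF K, ∃ ζ₁ ∈ unitsF K, ∃ ζ₂ ∈ unitsF K, ∃ ζ₃ ∈ unitsF K,
          ∃ ζ₂₁ ∈ unitsF K, ∃ ζ₃₂ ∈ unitsF K, ∃ ζ₁₃ ∈ unitsF K,
            z = act K ζ ζ₁ ζ₂ ζ₃ ζ₂₁ ζ₃₂ ζ₁₃ y := by
  have h₁ : Subgroup.IsComplement ((actSubgroup K).comap (MonoidHom.inl _ _) : Set _) R₁ := by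
    rw [Subgroup.isComplement_iff_existsUnique_eq_mul]
    simp only [mem_comap_inl_actSubgroup]
    simpa using hR₁
  have h₂ : Subgroup.IsComplement ((actSubgroup K).map (MonoidHom.snd _ _) : Set _) R₂ := by
    rw [Subgroup.isComplement_iff_existsUnique_eq_mul]
    simpa only [← SetLike.mem_coe, coe_map_snd_actSubgroup] using hR₂
  have h := Subgroup.isComplement_prod_of_comap_inl_of_map_snd h₁ h₂
  rw [Subgroup.isComplement_iff_existsUnique_eq_mul] at h
  simpa only [exists_act_eq_iff] using h
end

section
/- Let R ⊆ K^× be a system of representatives for K^× / F, and let R_F ⊆ F be a system of representatives for F / {ξ^3 : ξ ∈ F}. Then R_2 := ⋃_{ρ ∈ R_F} (ρR × R × R × R × R × R) is a system of representatives for the quotient group (K^×)^6 / H (with coordinates ordered as (y_{12}, y_{21}, y_{23}, y_{32}, y_{31}, y_{13})). -/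
/-!
`R⁶` represents `(K^×)⁶` modulo `F⁶`. On `F⁶` the weighted product
`α ↦ α₁₂ α₂₁² α₂₃ α₃₂² α₃₁ α₁₃²` induces `F⁶/H ≅ F/F³`, and it is the identity on the first
coordinate, so `{(ρ, 1, …, 1) : ρ ∈ R_F}` represents `F⁶/H`. Representatives along a tower
`H ⊆ F⁶ ⊆ (K^×)⁶` multiply, which gives `R₂`.
-/

open NumberField

open Set
open scoped Pointwise

/-- `S` meets every coset `H * y` with `y ∈ A` in exactly one point. -/
def IsRepSystem {G : Type*} [Mul G] (H S A : Set G) : Prop :=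
  ∀ y ∈ A, ∃! z, z ∈ S ∧ ∃ h ∈ H, z = h * y

namespace IsRepSystem

theorem prod {G N : Type*} [Mul G] [Mul N] {H₁ S₁ A₁ : Set G} {H₂ S₂ A₂ : Set N}
    (h₁ : IsRepSystem H₁ S₁ A₁) (h₂ : IsRepSystem H₂ S₂ A₂) :
    IsRepSystem (H₁ ×ˢ H₂) (S₁ ×ˢ S₂) (A₁ ×ˢ A₂) := by
  rintro ⟨y₁, y₂⟩ ⟨hy₁, hy₂⟩
  obtain ⟨-, ⟨hz₁, g₁, hg₁, rfl⟩, u₁⟩ := h₁ y₁ hy₁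
  obtain ⟨-, ⟨hz₂, g₂, hg₂, rfl⟩, u₂⟩ := h₂ y₂ hy₂
  refine ⟨(g₁ * y₁, g₂ * y₂), ⟨⟨hz₁, hz₂⟩, (g₁, g₂), ⟨hg₁, hg₂⟩, rfl⟩, ?_⟩
  rintro ⟨w₁, w₂⟩ ⟨⟨hw₁, hw₂⟩, ⟨k₁, k₂⟩, ⟨hk₁, hk₂⟩, hw⟩
  simp only [Prod.mk_mul_mk, Prod.mk.injEq] at hw
  rw [u₁ w₁ ⟨hw₁, k₁, hk₁, hw.1⟩, u₂ w₂ ⟨hw₂, k₂, hk₂, hw.2⟩]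

theorem mul {G : Type*} [Group G] {F : Subgroup G} {H S T A : Set G}
    (hS : IsRepSystem F S A) (hT : IsRepSystem H T F) (hHF : H ⊆ F) (hTF : T ⊆ F) :
    IsRepSystem H (T * S) A := by
  intro y hy
  obtain ⟨-, ⟨hs, f, hf, rfl⟩, uS⟩ := hS y hy
  obtain ⟨-, ⟨ht, h, hh, rfl⟩, uT⟩ := hT f⁻¹ (inv_mem hf)
  refine ⟨h * f⁻¹ * (f * y), ⟨mul_mem_mul ht hs, h, hh, by group⟩, ?_⟩
  rintro _ ⟨⟨t, htT, s, hsS, rfl⟩, k, hk, he⟩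
  have hs : s = f * y := uS s ⟨hsS, t⁻¹ * k, mul_mem (inv_mem (hTF htT)) (hHF hk), by
    rw [mul_assoc, ← he, inv_mul_cancel_left]⟩
  have ht : t = h * f⁻¹ := uT t ⟨htT, k, hk,
    eq_mul_inv_of_mul_eq (mul_right_cancel (by rw [mul_assoc, ← hs]; exact he))⟩
  rw [hs, ht]

theorem image_of_leftInverse {G G' : Type*} [Group G] [Group G'] {φ : G' →* G} {ι : G →* G'}
    (hφι : Function.LeftInverse φ ι) {F : Subgroup G} {F' : Subgroup G'}
    (hφ : F' ≤ F.comap φ) (hι : F ≤ F'.comap ι) {C RF : Set G} (hRF_sub : RF ⊆ F)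
    (hRF : IsRepSystem C RF F) :
    IsRepSystem ((F' : Set G') ∩ φ ⁻¹' C) (ι '' RF) F' := by
  intro α hα
  obtain ⟨-, ⟨hρ, c, hc, rfl⟩, u⟩ := hRF (φ α) (hφ hα)
  refine ⟨ι (c * φ α), ⟨mem_image_of_mem ι hρ, ι (c * φ α) * α⁻¹,
    ⟨mul_mem (hι (hRF_sub hρ)) (inv_mem hα), ?_⟩, by group⟩, ?_⟩
  · simpa [hφι _] using hc
  · rintro _ ⟨⟨ρ, hρ, rfl⟩, k, ⟨-, hk⟩, he⟩
    rw [u ρ ⟨hρ, φ k, hk, by rw [← map_mul, ← he, hφι]⟩]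

end IsRepSystem

theorem Set.image_inl_mul_prod {M N : Type*} [Monoid M] [Monoid N] (A B : Set M) (C : Set N) :
    MonoidHom.inl M N '' A * B ×ˢ C = (A * B) ×ˢ C := by
  have : MonoidHom.inl M N '' A = A ×ˢ {1} := by ext ⟨a, b⟩; simp [eq_comm]
  rw [this, prod_mul_prod_comm, singleton_one, one_mul]

def weightedProd (M : Type*) [CommMonoid M] : M × M × M × M × M × M →* M where
  toFun α := α.1 * α.2.1 ^ 2 * α.2.2.1 * α.2.2.2.1 ^ 2 * α.2.2.2.2.1 * α.2.2.2.2.2 ^ 2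
  map_one' := by simp
  map_mul' α β := by simp only [Prod.fst_mul, Prod.snd_mul, mul_pow]; ac_rfl

theorem weightedProd_leftInverse_inl (M : Type*) [CommMonoid M] :
    Function.LeftInverse (weightedProd M) (MonoidHom.inl M _) := fun x ↦ by
  simp [weightedProd]

theorem Hset_eq_inter_preimage (K : Type) [Field K] [NumberField K] :
    Hset K = ((unitsF K).prod ((unitsF K).prod ((unitsF K).prod ((unitsF K).prod
      ((unitsF K).prod (unitsF K))))) : Set _) ∩ weightedProd Kˣ ⁻¹' ((· ^ 3) '' unitsF K) := by
  ext α
  simp [Hset, weightedProd, Subgroup.mem_prod, eq_comm, and_assoc]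

/-- Lemma 2.5: if `R` is a system of representatives for `K^×/F` and
`R_F ⊆ F` is a system of representatives for `F` modulo cubes, then
`R₂ := ⋃_{ρ ∈ R_F} (ρR × R × R × R × R × R)` is a system of representatives for
`(K^×)⁶/H`, the coordinates being ordered as `(y₁₂, y₂₁, y₂₃, y₃₂, y₃₁, y₁₃)`. -/
theorem stmt6 (K : Type) [Field K] [NumberField K]
    (R RF : Set Kˣ)
    (hR : ∀ y : Kˣ, ∃! z, z ∈ R ∧ ∃ ζ ∈ unitsF K, z = ζ * y)
    (hRFsub : RF ⊆ (unitsF K : Set Kˣ))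
    (hRF : ∀ y ∈ unitsF K, ∃! z, z ∈ RF ∧ ∃ ξ ∈ unitsF K, z = ξ ^ 3 * y) :
    ∀ y : Kˣ × Kˣ × Kˣ × Kˣ × Kˣ × Kˣ,
      ∃! z : Kˣ × Kˣ × Kˣ × Kˣ × Kˣ × Kˣ,
        ((∃ ρ ∈ RF, ∃ x ∈ R, z.1 = ρ * x) ∧ z.2.1 ∈ R ∧ z.2.2.1 ∈ R ∧
          z.2.2.2.1 ∈ R ∧ z.2.2.2.2.1 ∈ R ∧ z.2.2.2.2.2 ∈ R) ∧
        ∃ h ∈ Hset K, z = h * y := by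
  set F := unitsF K
  set F₆ := F.prod (F.prod (F.prod (F.prod (F.prod F))))
  have hφ : F₆ ≤ F.comap (weightedProd Kˣ) := by
    rintro α ⟨h₁, h₂, h₃, h₄, h₅, h₆⟩
    exact mul_mem (mul_mem (mul_mem (mul_mem (mul_mem h₁ (pow_mem h₂ 2)) h₃) (pow_mem h₄ 2)) h₅)
      (pow_mem h₆ 2)
  have hι : F ≤ F₆.comap (MonoidHom.inl _ _) := fun x hx ↦ by
    simp [F₆, Subgroup.mem_prod, hx]
  have hR : IsRepSystem F R univ := fun y _ ↦ hR y
  have hR₆ : IsRepSystem F₆ (R ×ˢ R ×ˢ R ×ˢ R ×ˢ R ×ˢ R) univ := by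
    simpa only [F₆, Subgroup.coe_prod, univ_prod_univ] using
      hR.prod (hR.prod (hR.prod (hR.prod (hR.prod hR))))
  have hRF : IsRepSystem ((· ^ 3) '' F) RF F := by
    simpa only [IsRepSystem, exists_mem_image, SetLike.mem_coe] using hRF
  have hT := hRF.image_of_leftInverse (weightedProd_leftInverse_inl _) hφ hι hRFsub
  have hH := hR₆.mul hT inter_subset_left (image_subset_iff.2 fun x hx ↦ hι (hRFsub hx))
  rw [← Hset_eq_inter_preimage, Set.image_inl_mul_prod] at hH
  intro y
  refine (existsUnique_congr fun z ↦ ?_).1 (hH y trivial)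
  simp only [mem_prod, mem_mul, @eq_comm _ _ z.1]
end

section
/- Let D, B ⊆ R^n be bounded subsets with B ∈ Lip(n, M, L), and let Λ ⊆ R^n be a lattice (a discrete subgroup of rank n). Then #{λ ∈ Λ : (λ + D) ∩ B ≠ ∅} ≤ C(Λ, D, n) · M (L+1)^{n−1}, where C(Λ, D, n) depends only on Λ, D and n. -/
open Set

/-- The unit cube `[0,1]^m` in `R^m` (with the Euclidean norm). -/
def unitCube (m : ℕ) : Set (EuclideanSpace ℝ (Fin m)) := {v | ∀ i, v i ∈ Set.Icc (0 : ℝ) 1}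

/-- `B ∈ Lip(n, M, L)`: `B ⊆ R^n` is covered by the images of `M` maps
`Φ : [0,1]^{n-1} → R^n`, each satisfying the Lipschitz condition `|Φ(v) - Φ(w)| ≤ L|v - w|`
with respect to the Euclidean norms. (For `n = 1`, `[0,1]⁰` is a single point, so these
are the sets with at most `M` elements.) -/
def InLip (n M : ℕ) (L : ℝ) (B : Set (EuclideanSpace ℝ (Fin n))) : Prop :=
  ∃ Φ : Fin M → (EuclideanSpace ℝ (Fin (n - 1)) → EuclideanSpace ℝ (Fin n)),
    (∀ i, ∀ v ∈ unitCube (n - 1), ∀ w ∈ unitCube (n - 1),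
      ‖Φ i v - Φ i w‖ ≤ L * ‖v - w‖) ∧
    B ⊆ ⋃ i, Φ i '' unitCube (n - 1)

/-!
Choose an integer `k` with `L ≤ k ≤ L + 1` and the grid of `k ^ (n - 1)` points of `[0,1]^{n-1}`
with coordinates in `{0, 1/k, …, (k-1)/k}`: every point of the cube is within `√(n-1)/k` of the
grid, so an `L`-Lipschitz image of the cube lies in `k ^ (n - 1)` balls of radius `√(n-1)`, and
`B` in `M k ^ (n - 1)` of them. If `(λ + D) ∩ B ≠ ∅` with `D ⊆ closedBall 0 ρ`, then `λ` lies in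
one of these balls enlarged by `ρ`. Finally, any two lattice points in a ball of radius `r` differ
by a lattice point of norm `≤ 2r`, so each ball contains at most
`C = #(Λ ∩ closedBall 0 (2r))` lattice points, which is finite since `Λ` is discrete.
-/

open Metric

lemma norm_le_sqrt_mul_of_forall_abs_le {m : ℕ} {x : EuclideanSpace ℝ (Fin m)} {c : ℝ}
    (hc : 0 ≤ c) (hx : ∀ i, |x i| ≤ c) : ‖x‖ ≤ √m * c := by
  have hsum : ∑ i, ‖x i‖ ^ 2 ≤ m * c ^ 2 := calc
    ∑ i, ‖x i‖ ^ 2 ≤ ∑ _i : Fin m, c ^ 2 :=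
      Finset.sum_le_sum fun i _ => pow_le_pow_left₀ (norm_nonneg _) (hx i) 2
    _ = m * c ^ 2 := by simp
  calc ‖x‖ = √(∑ i, ‖x i‖ ^ 2) := EuclideanSpace.norm_eq x
    _ ≤ √(m * c ^ 2) := Real.sqrt_le_sqrt hsum
    _ = √m * c := by rw [Real.sqrt_mul (Nat.cast_nonneg m), Real.sqrt_sq hc]

lemma exists_fin_abs_sub_div_le {k : ℕ} (hk : 0 < k) {t : ℝ} (ht : t ∈ Icc (0 : ℝ) 1) :
    ∃ i : Fin k, |t - i / k| ≤ 1 / k := by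
  have hk' : (0 : ℝ) < k := Nat.cast_pos.2 hk
  have htk : 0 ≤ t * k := mul_nonneg ht.1 hk'.le
  obtain ⟨i, hik, hlo, hhi⟩ : ∃ i : ℕ, i < k ∧ (i : ℝ) ≤ t * k ∧ t * k ≤ i + 1 := by
    by_cases h : ⌊t * k⌋₊ < k
    · exact ⟨_, h, Nat.floor_le htk, (Nat.lt_floor_add_one _).le⟩
    · -- the floor reaches `k` only at `t = 1`
      have hkt : (k : ℝ) ≤ t * k := (Nat.le_floor_iff htk).1 (not_lt.1 h)
      refine ⟨k - 1, by omega, ?_, ?_⟩ <;>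
        simp only [Nat.cast_sub hk, Nat.cast_one] <;> nlinarith [ht.2]
  refine ⟨⟨i, hik⟩, ?_⟩
  have hdiff : t - i / k = (t * k - i) / k := by field_simp
  rw [hdiff, abs_div, abs_of_pos hk', div_le_div_iff_of_pos_right hk', abs_le]
  constructor <;> linarith

noncomputable def cubeGridPoint {m : ℕ} (k : ℕ) (g : Fin m → Fin k) : EuclideanSpace ℝ (Fin m) :=
  WithLp.toLp 2 fun j => (g j : ℝ) / k

lemma cubeGridPoint_mem_unitCube {m k : ℕ} (g : Fin m → Fin k) :
    cubeGridPoint k g ∈ unitCube m := fun j =>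
  ⟨div_nonneg (Nat.cast_nonneg _) (Nat.cast_nonneg k),
    div_le_one_of_le₀ (by exact_mod_cast (g j).2.le) (Nat.cast_nonneg k)⟩

lemma exists_norm_sub_cubeGridPoint_le {m k : ℕ} (hk : 0 < k) {v : EuclideanSpace ℝ (Fin m)}
    (hv : v ∈ unitCube m) : ∃ g : Fin m → Fin k, ‖v - cubeGridPoint k g‖ ≤ √m / k := by
  choose g hg using fun j => exists_fin_abs_sub_div_le hk (hv j)
  refine ⟨g, ?_⟩
  have := norm_le_sqrt_mul_of_forall_abs_le (x := v - cubeGridPoint k g) (c := 1 / k)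
    (by positivity) hg
  rwa [mul_one_div] at this

lemma image_unitCube_subset_iUnion_closedBall {E : Type*} [SeminormedAddCommGroup E] {m k : ℕ}
    {Φ : EuclideanSpace ℝ (Fin m) → E} {L : ℝ} (hk : 0 < k) (hLk : L ≤ k)
    (hΦ : ∀ v ∈ unitCube m, ∀ w ∈ unitCube m, ‖Φ v - Φ w‖ ≤ L * ‖v - w‖) :
    Φ '' unitCube m ⊆ ⋃ g : Fin m → Fin k, closedBall (Φ (cubeGridPoint k g)) √m := by
  rintro _ ⟨v, hv, rfl⟩
  obtain ⟨g, hg⟩ := exists_norm_sub_cubeGridPoint_le hk hv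
  refine mem_iUnion.2 ⟨g, mem_closedBall_iff_norm.2 ?_⟩
  calc ‖Φ v - Φ (cubeGridPoint k g)‖ ≤ L * ‖v - cubeGridPoint k g‖ :=
        hΦ v hv _ (cubeGridPoint_mem_unitCube g)
    _ ≤ k * (√m / k) := mul_le_mul hLk hg (norm_nonneg _) (Nat.cast_nonneg k)
    _ = √m := mul_div_cancel₀ _ (Nat.cast_pos.2 hk).ne'

lemma InLip.exists_subset_iUnion_closedBall {n M : ℕ} {L : ℝ}
    {B : Set (EuclideanSpace ℝ (Fin n))} (hB : InLip n M L B) (hL : 0 < L) :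
    ∃ c : Fin M × (Fin (n - 1) → Fin ⌈L⌉₊) → EuclideanSpace ℝ (Fin n),
      B ⊆ ⋃ p, closedBall (c p) √(n - 1 : ℕ) := by
  obtain ⟨Φ, hΦ, hcover⟩ := hB
  refine ⟨fun p => Φ p.1 (cubeGridPoint _ p.2), hcover.trans <| iUnion_subset fun i => ?_⟩
  refine (image_unitCube_subset_iUnion_closedBall (Nat.ceil_pos.2 hL) (Nat.le_ceil L)
    (hΦ i)).trans <| iUnion_subset fun g => ?_
  exact subset_iUnion (fun p : Fin M × _ => closedBall (Φ p.1 (cubeGridPoint _ p.2)) _) (i, g)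

namespace AddSubgroup

variable {E : Type*} [NormedAddCommGroup E] [ProperSpace E] (Λ : AddSubgroup E)
  [DiscreteTopology Λ]

lemma finite_inter_closedBall (x : E) (r : ℝ) : ((Λ : Set E) ∩ closedBall x r).Finite := by
  rw [inter_comm]
  exact finite_isBounded_inter_isClosed DiscreteTopology.isDiscrete isBounded_closedBall
    Λ.isClosed_of_discrete

lemma ncard_inter_closedBall_le (x : E) (r : ℝ) :
    ((Λ : Set E) ∩ closedBall x r).ncard ≤ ((Λ : Set E) ∩ closedBall 0 (2 * r)).ncard := by
  rcases eq_empty_or_nonempty ((Λ : Set E) ∩ closedBall x r) with h | ⟨y₀, hy₀Λ, hy₀⟩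
  · simp [h]
  refine ncard_le_ncard_of_injOn (· - y₀) (fun y ⟨hyΛ, hy⟩ => ⟨Λ.sub_mem hyΛ hy₀Λ, ?_⟩)
    sub_left_injective.injOn (Λ.finite_inter_closedBall 0 _)
  rw [mem_closedBall_zero_iff, two_mul]
  calc ‖y - y₀‖ ≤ ‖y - x‖ + ‖x - y₀‖ := norm_sub_le_norm_sub_add_norm_sub y x y₀
    _ ≤ r + r := add_le_add (mem_closedBall_iff_norm.1 hy) (mem_closedBall_iff_norm'.1 hy₀)

lemma ncard_le_of_subset_iUnion_closedBall {ι : Type*} [Fintype ι] {S : Set E} (c : ι → E)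
    (r : ℝ) (hSΛ : S ⊆ Λ) (hS : S ⊆ ⋃ i, closedBall (c i) r) :
    S.ncard ≤ Fintype.card ι * ((Λ : Set E) ∩ closedBall 0 (2 * r)).ncard := by
  have hS' : S ⊆ ⋃ i, (Λ : Set E) ∩ closedBall (c i) r := by
    rw [← inter_iUnion]
    exact subset_inter hSΛ hS
  calc S.ncard ≤ (⋃ i, (Λ : Set E) ∩ closedBall (c i) r).ncard :=
        ncard_le_ncard hS' (finite_iUnion fun i => Λ.finite_inter_closedBall (c i) r)
    _ ≤ ∑ i, ((Λ : Set E) ∩ closedBall (c i) r).ncard := ncard_iUnion_le_of_fintype _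
    _ ≤ ∑ _i : ι, ((Λ : Set E) ∩ closedBall 0 (2 * r)).ncard :=
        Finset.sum_le_sum fun i _ => Λ.ncard_inter_closedBall_le (c i) r
    _ = _ := by simp

end AddSubgroup

theorem stmt9_general (n : ℕ)
    (Λ : Submodule ℤ (EuclideanSpace ℝ (Fin n))) [DiscreteTopology Λ]
    (D : Set (EuclideanSpace ℝ (Fin n))) (hD : Bornology.IsBounded D) :
    ∃ C : ℝ, ∀ M : ℕ, 0 < M → ∀ L : ℝ, 0 < L →
      ∀ B : Set (EuclideanSpace ℝ (Fin n)), Bornology.IsBounded B → InLip n M L B →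
        (Nat.card {x : EuclideanSpace ℝ (Fin n) //
            x ∈ Λ ∧ (((x + ·) '' D) ∩ B).Nonempty} : ℝ) ≤
          C * M * (L + 1) ^ (n - 1) := by
  obtain ⟨ρ, hρ⟩ := isBounded_iff_forall_norm_le.1 hD
  set r := √(n - 1 : ℕ) + ρ
  have : DiscreteTopology Λ.toAddSubgroup := ‹DiscreteTopology Λ›
  refine ⟨((Λ : Set (EuclideanSpace ℝ (Fin n))) ∩ closedBall 0 (2 * r)).ncard,
    fun M _ L hL B _ hB => ?_⟩
  obtain ⟨c, hc⟩ := hB.exists_subset_iUnion_closedBall hL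
  have hsub : {x | x ∈ Λ ∧ (((x + ·) '' D) ∩ B).Nonempty} ⊆ ⋃ p, closedBall (c p) r := by
    rintro x ⟨-, _, ⟨d, hd, rfl⟩, hxdB⟩
    obtain ⟨p, hp⟩ := mem_iUnion.1 (hc hxdB)
    refine mem_iUnion.2 ⟨p, mem_closedBall_iff_norm.2 ?_⟩
    calc ‖x - c p‖ = ‖(x + d - c p) - d‖ := by abel_nf
      _ ≤ ‖x + d - c p‖ + ‖d‖ := norm_sub_le _ _
      _ ≤ √(n - 1 : ℕ) + ρ := add_le_add (mem_closedBall_iff_norm.1 hp) (hρ d hd)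
  have hcount := Λ.toAddSubgroup.ncard_le_of_subset_iUnion_closedBall c r (fun _ hx => hx.1) hsub
  simp only [Fintype.card_prod, Fintype.card_fun, Fintype.card_fin] at hcount
  have hceil : (⌈L⌉₊ : ℝ) ^ (n - 1) ≤ (L + 1) ^ (n - 1) :=
    pow_le_pow_left₀ (Nat.cast_nonneg _) (Nat.ceil_lt_add_one hL.le).le _
  set N := ((Λ : Set (EuclideanSpace ℝ (Fin n))) ∩ closedBall 0 (2 * r)).ncard
  calc _ ≤ ((M * ⌈L⌉₊ ^ (n - 1) * N : ℕ) : ℝ) := Nat.cast_le.2 hcount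
    _ = N * M * (⌈L⌉₊ : ℝ) ^ (n - 1) := by push_cast; ring
    _ ≤ N * M * (L + 1) ^ (n - 1) := by gcongr

/-- Lemma 4.1 (i): for a lattice `Λ ⊆ R^n` and bounded sets
`D`, `B ⊆ R^n` with `B ∈ Lip(n, M, L)`,
`#{λ ∈ Λ : (λ + D) ∩ B ≠ ∅} ≤ C(Λ, D, n) · M (L+1)^{n-1}`. -/
theorem stmt9 (n : ℕ) (hn : 0 < n)
    (Λ : Submodule ℤ (EuclideanSpace ℝ (Fin n))) [DiscreteTopology Λ] [IsZLattice ℝ Λ]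
    (D : Set (EuclideanSpace ℝ (Fin n))) (hD : Bornology.IsBounded D) :
    ∃ C : ℝ, ∀ M : ℕ, 0 < M → ∀ L : ℝ, 0 < L →
      ∀ B : Set (EuclideanSpace ℝ (Fin n)), Bornology.IsBounded B → InLip n M L B →
        (Nat.card {x : EuclideanSpace ℝ (Fin n) //
            x ∈ Λ ∧ (((x + ·) '' D) ∩ B).Nonempty} : ℝ) ≤
          C * M * (L + 1) ^ (n - 1) :=
  stmt9_general n Λ D hD
end

section
/- Let a be a nonzero fractional ideal of K, let σ: K → R^r × C^s be the standard (canonical) embedding, and let τ be the linear automorphism of R^r × C^s (regarded as R^d) given by τ(z_1, …, z_{r+s}) = (t_1 z_1, …, t_{r+s} z_{r+s}) with t_1, …, t_{r+s} > 0. Then (τ ∘ σ)(a) is a lattice in R^r × C^s of covolume t_1^{d_1} ⋯ t_{r+s}^{d_{r+s}} · 2^{−s} · Na · √|Δ_K|, and its first successive minimum λ with respect to the Euclidean unit ball satisfies λ ≥ (t_1^{d_1} ⋯ t_{r+s}^{d_{r+s}} · Na)^{1/d}. -/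
/-!
The scaling `τ` is a linear automorphism of determinant `∏ tᵢ^{dᵢ}`, so `τ(σ(a))` is the pullback
of the ideal lattice `σ(a)` along `τ⁻¹`; its covolume is `|det τ|` times the known covolume
`2^{-s} · Na · √|Δ_K|` of `σ(a)`.

For the minimum, let `0 ≠ x ∈ a` and `v = τ(σ(x))`. The mixed norm `∏ ‖v_w‖^{d_w}` is
multiplicative, so it equals `∏ tᵢ^{dᵢ} · |N(x)|`, and `|N(x)| ≥ Na` because `(x) = a · b`
with `b` a nonzero integral ideal. Each `‖v_w‖` is at most the Euclidean norm of `v`, so the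
mixed norm is at most `‖v‖^d`.
-/

open NumberField NumberField.InfinitePlace MeasureTheory nonZeroDivisors
open scoped Classical

noncomputable section

variable (K : Type) [Field K] [NumberField K]

/-- The scaling automorphism `τ` of `R^r × C^s` given by
`τ(z₁, …, z_{r+s}) = (t₁z₁, …, t_{r+s}z_{r+s})`, as an additive map. -/
def scaling (t₁ : {w : InfinitePlace K // IsReal w} → ℝ)
    (t₂ : {w : InfinitePlace K // IsComplex w} → ℝ) :
    (({w : InfinitePlace K // IsReal w} → ℝ) × ({w : InfinitePlace K // IsComplex w} → ℂ)) →+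
      (({w : InfinitePlace K // IsReal w} → ℝ) × ({w : InfinitePlace K // IsComplex w} → ℂ))
    where
  toFun p := (fun w => t₁ w * p.1 w, fun w => (t₂ w : ℂ) * p.2 w)
  map_zero' := by
    refine Prod.ext ?_ ?_ <;> funext w <;> simp
  map_add' p q := by
    refine Prod.ext ?_ ?_ <;> funext w <;> simp [mul_add]

/-- The image `τ(σ(a))` of a fractional ideal `a` of `K` under the standard (mixed)
embedding `σ : K → R^r × C^s` followed by the scaling `τ`, as a `ℤ`-submodule. -/
def scaledIdealLattice (a : FractionalIdeal (RingOfIntegers K)⁰ K)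
    (t₁ : {w : InfinitePlace K // IsReal w} → ℝ)
    (t₂ : {w : InfinitePlace K // IsComplex w} → ℝ) :
    Submodule ℤ
      (({w : InfinitePlace K // IsReal w} → ℝ) × ({w : InfinitePlace K // IsComplex w} → ℂ)) :=
  Submodule.map
    (((scaling K t₁ t₂).comp (mixedEmbedding K).toAddMonoidHom).toIntLinearMap)
    ((a : Submodule (RingOfIntegers K) K).restrictScalars ℤ)

/-- The square of the Euclidean norm on `R^r × C^s` (identifying `C` with `R²`). -/
def euclNormSq
    (p : ({w : InfinitePlace K // IsReal w} → ℝ) × ({w : InfinitePlace K // IsComplex w} → ℂ)) :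
    ℝ :=
  (∑ w, (p.1 w) ^ 2) + ∑ w, ‖p.2 w‖ ^ 2

namespace FractionalIdeal

variable {R : Type*} [CommRing R] [IsDedekindDomain R] [Module.Free ℤ R] [Module.Finite ℤ R]
  {F : Type*} [Field F] [Algebra R F] [IsFractionRing R F]

theorem absNorm_le_absNorm_of_le {I J : FractionalIdeal R⁰ F} (hI : I ≠ 0) (hIJ : I ≤ J) :
    absNorm J ≤ absNorm I := by
  have hJ : J ≠ 0 := ne_bot_of_le_ne_bot hI hIJ
  obtain ⟨I₀, hI₀⟩ := le_one_iff_exists_coeIdeal.mp <|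
    calc J⁻¹ * I ≤ J⁻¹ * J := mul_le_mul_right hIJ _
      _ = 1 := inv_mul_cancel₀ hJ
  have hI₀0 : I₀ ≠ ⊥ := by
    rintro rfl
    exact mul_ne_zero (inv_ne_zero hJ) hI (by simpa using hI₀.symm)
  have hone : (1 : ℚ) ≤ absNorm (I₀ : FractionalIdeal R⁰ F) := by
    rw [coeIdeal_absNorm]
    exact_mod_cast Nat.one_le_iff_ne_zero.mpr (by simpa [Ideal.absNorm_eq_zero_iff] using hI₀0)
  calc absNorm J ≤ absNorm J * absNorm (I₀ : FractionalIdeal R⁰ F) :=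
        le_mul_of_one_le_right (absNorm_nonneg J) hone
    _ = absNorm I := by rw [← map_mul, hI₀, ← mul_assoc, mul_inv_cancel₀ hJ, one_mul]

theorem absNorm_le_abs_norm_of_mem [IsLocalization (Algebra.algebraMapSubmonoid R ℤ⁰) F]
    [Algebra ℚ F] [Module.Finite ℚ F] {I : FractionalIdeal R⁰ F} {x : F}
    (hx : x ∈ I) (hx0 : x ≠ 0) : absNorm I ≤ |Algebra.norm ℚ x| := by
  rw [← absNorm_span_singleton R]
  exact absNorm_le_absNorm_of_le (spanSingleton_ne_zero_iff.mpr hx0)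
    (spanSingleton_le_iff_mem.mpr hx)

end FractionalIdeal

theorem ZLattice.covolume_comap_symm {E : Type*} [NormedAddCommGroup E] [NormedSpace ℝ E]
    [FiniteDimensional ℝ E] [MeasurableSpace E] [BorelSpace E] (L : Submodule ℤ E)
    [DiscreteTopology L] [IsZLattice ℝ L] (μ : Measure E) [μ.IsAddHaarMeasure]
    (e : E ≃L[ℝ] E) :
    ZLattice.covolume (ZLattice.comap ℝ L e.symm.toLinearMap) μ =
      |LinearMap.det (e : E →ₗ[ℝ] E)| * ZLattice.covolume L μ := by
  set c := |LinearMap.det (e : E →ₗ[ℝ] E)|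
  have hc : 0 < c := abs_pos.mpr e.toLinearEquiv.isUnit_det'.ne_zero
  have : (ENNReal.ofReal c • μ).IsAddHaarMeasure :=
    .smul _ (ENNReal.ofReal_pos.mpr hc).ne' ENNReal.ofReal_ne_top
  have hmp : MeasurePreserving e.symm μ (ENNReal.ofReal c • μ) := by
    refine ⟨e.symm.continuous.measurable, ?_⟩
    convert Measure.map_linearMap_addHaar_eq_smul_addHaar μ e.toLinearEquiv.symm.isUnit_det'.ne_zero
      using 2
    · rfl
    · rw [LinearEquiv.det_coe_symm, inv_inv]
  have hF := ZLattice.isAddFundamentalDomain (Module.Free.chooseBasis ℤ L) μ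
  rw [ZLattice.covolume_comap L _ μ hmp,
    ZLattice.covolume_eq_measure_fundamentalDomain L _ (hF.mono Measure.smul_absolutelyContinuous),
    ZLattice.covolume_eq_measure_fundamentalDomain L μ hF, measureReal_ennreal_smul_apply,
    ENNReal.toReal_ofReal hc.le]

open mixedEmbedding

section

variable (t₁ : {w : InfinitePlace K // IsReal w} → ℝ)
  (t₂ : {w : InfinitePlace K // IsComplex w} → ℝ)

def scalingLinearMap : mixedSpace K →ₗ[ℝ] mixedSpace K :=
  (LinearMap.pi fun w => (t₁ w • LinearMap.id).comp (LinearMap.proj w)).prodMap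
    (LinearMap.pi fun w => (t₂ w • LinearMap.id).comp (LinearMap.proj w))

omit [NumberField K] in
theorem coe_scalingLinearMap : ⇑(scalingLinearMap K t₁ t₂) = scaling K t₁ t₂ := by
  ext p w <;> simp [scalingLinearMap, scaling, Complex.real_smul]

theorem det_scalingLinearMap :
    LinearMap.det (scalingLinearMap K t₁ t₂) = (∏ w, t₁ w) * ∏ w, t₂ w ^ 2 := by
  simp [scalingLinearMap, LinearMap.det_prodMap, LinearMap.det_pi, LinearMap.det_smul]

theorem norm_scaling (p : mixedSpace K) :
    mixedEmbedding.norm (scaling K t₁ t₂ p) =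
      (∏ w, |t₁ w|) * (∏ w, t₂ w ^ 2) * mixedEmbedding.norm p := by
  rw [show scaling K t₁ t₂ p = (t₁, fun w => (t₂ w : ℂ)) * p from rfl, map_mul,
    mixedEmbedding.norm_apply, prod_eq_prod_mul_prod]
  congr 2 <;> refine Finset.prod_congr rfl fun w _ => ?_
  · rw [mult, if_pos w.2, pow_one, normAtPlace_apply_of_isReal w.2, Real.norm_eq_abs]
  · rw [mult, if_neg (not_isReal_iff_isComplex.mpr w.2), normAtPlace_apply_of_isComplex w.2,
      Complex.norm_real, Real.norm_eq_abs, sq_abs]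

theorem scaledIdealLattice_eq_comap {a : FractionalIdeal (𝓞 K)⁰ K} (ha : a ≠ 0)
    (τ : mixedSpace K ≃L[ℝ] mixedSpace K) (hτ : ⇑τ = scaling K t₁ t₂) :
    scaledIdealLattice K a t₁ t₂ =
      ZLattice.comap ℝ (idealLattice K (Units.mk0 a ha)) τ.symm.toLinearMap := by
  ext v
  change _ ↔ τ.symm v ∈ idealLattice K _
  rw [mem_idealLattice]
  simp [scaledIdealLattice, ← hτ, τ.eq_symm_apply]

theorem normAtPlace_le_sqrt_euclNormSq (p : mixedSpace K) (w : InfinitePlace K) :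
    normAtPlace w p ≤ √(euclNormSq K p) := by
  obtain hw | hw := isReal_or_isComplex w
  · rw [normAtPlace_apply_of_isReal hw, Real.norm_eq_abs]
    refine Real.abs_le_sqrt (le_add_of_le_of_nonneg ?_ (by positivity))
    exact Finset.single_le_sum (f := fun w => p.1 w ^ 2) (fun _ _ => sq_nonneg _)
      (Finset.mem_univ (⟨w, hw⟩ : {w // IsReal w}))
  · rw [normAtPlace_apply_of_isComplex hw, ← abs_norm]
    refine Real.abs_le_sqrt (le_add_of_nonneg_of_le (by positivity) ?_)
    exact Finset.single_le_sum (f := fun w => ‖p.2 w‖ ^ 2) (fun _ _ => sq_nonneg _)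
      (Finset.mem_univ (⟨w, hw⟩ : {w // IsComplex w}))

theorem norm_le_sqrt_euclNormSq_pow (p : mixedSpace K) :
    mixedEmbedding.norm p ≤ √(euclNormSq K p) ^ Module.finrank ℚ K := by
  rw [mixedEmbedding.norm_apply, ← sum_mult_eq, ← Finset.prod_pow_eq_pow_sum]
  exact Finset.prod_le_prod (fun w _ => pow_nonneg (normAtPlace_nonneg w p) _)
    fun w _ => pow_le_pow_left₀ (normAtPlace_nonneg w p) (normAtPlace_le_sqrt_euclNormSq K p w) _

theorem mul_absNorm_le_norm_of_mem_scaledIdealLattice {a : FractionalIdeal (𝓞 K)⁰ K}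
    {v : mixedSpace K} (hv : v ∈ scaledIdealLattice K a t₁ t₂) (hv0 : v ≠ 0) :
    (∏ w, |t₁ w|) * (∏ w, t₂ w ^ 2) * (FractionalIdeal.absNorm a : ℝ) ≤
      mixedEmbedding.norm v := by
  obtain ⟨x, hx, rfl⟩ := hv
  have hx0 : x ≠ 0 := by
    rintro rfl
    exact hv0 (map_zero _)
  change _ ≤ mixedEmbedding.norm (scaling K t₁ t₂ (mixedEmbedding K x))
  rw [norm_scaling, norm_eq_norm]
  gcongr
  exact_mod_cast FractionalIdeal.absNorm_le_abs_norm_of_mem hx hx0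

theorem mul_absNorm_rpow_le_sqrt_euclNormSq {a : FractionalIdeal (𝓞 K)⁰ K}
    {v : mixedSpace K} (hv : v ∈ scaledIdealLattice K a t₁ t₂) (hv0 : v ≠ 0) :
    ((∏ w, |t₁ w|) * (∏ w, t₂ w ^ 2) * (FractionalIdeal.absNorm a : ℝ)) ^
      (Module.finrank ℚ K : ℝ)⁻¹ ≤ √(euclNormSq K v) := by
  have hNa : (0 : ℝ) ≤ FractionalIdeal.absNorm a := by
    exact_mod_cast FractionalIdeal.absNorm_nonneg a
  rw [Real.rpow_inv_le_iff_of_pos (by positivity) (Real.sqrt_nonneg _)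
    (by exact_mod_cast Module.finrank_pos), Real.rpow_natCast]
  exact (mul_absNorm_le_norm_of_mem_scaledIdealLattice K t₁ t₂ hv hv0).trans
    (norm_le_sqrt_euclNormSq_pow K v)

end

/-- Lemma 5.1: for a nonzero fractional ideal `a` and positive scaling
factors `t_i`, the set `τ(σ(a))` is a lattice in `R^r × C^s` of covolume
`t₁^{d_1} ⋯ t_{r+s}^{d_{r+s}} · 2^{-s} · Na · √|Δ_K|`, whose first successive minimum with
respect to the Euclidean unit ball is at least `(t₁^{d_1} ⋯ t_{r+s}^{d_{r+s}} · Na)^{1/d}`. -/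
theorem stmt13 (a : FractionalIdeal (RingOfIntegers K)⁰ K) (ha : a ≠ 0)
    (t₁ : {w : InfinitePlace K // IsReal w} → ℝ)
    (t₂ : {w : InfinitePlace K // IsComplex w} → ℝ)
    (ht₁ : ∀ w, 0 < t₁ w) (ht₂ : ∀ w, 0 < t₂ w) :
    ∃ h₁ : DiscreteTopology (scaledIdealLattice K a t₁ t₂),
      (@IsZLattice ℝ _ _ _ _ (scaledIdealLattice K a t₁ t₂) h₁) ∧
      ZLattice.covolume (scaledIdealLattice K a t₁ t₂) =
        (∏ w, t₁ w) * (∏ w, (t₂ w) ^ 2) * ((2 : ℝ) ^ (nrComplexPlaces K))⁻¹ *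
          (FractionalIdeal.absNorm a : ℝ) * Real.sqrt |(discr K : ℝ)| ∧
      ∀ v ∈ scaledIdealLattice K a t₁ t₂, v ≠ 0 →
        Real.sqrt (euclNormSq K v) ≥
          ((∏ w, t₁ w) * (∏ w, (t₂ w) ^ 2) * (FractionalIdeal.absNorm a : ℝ)) ^
            ((Module.finrank ℚ K : ℝ))⁻¹ := by
  have hP : 0 < (∏ w, t₁ w) * ∏ w, t₂ w ^ 2 :=
    mul_pos (Finset.prod_pos fun w _ => ht₁ w) (Finset.prod_pos fun w _ => pow_pos (ht₂ w) 2)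
  have hmin : ∀ v ∈ scaledIdealLattice K a t₁ t₂, v ≠ 0 → √(euclNormSq K v) ≥
      ((∏ w, t₁ w) * (∏ w, t₂ w ^ 2) * (FractionalIdeal.absNorm a : ℝ)) ^
        (Module.finrank ℚ K : ℝ)⁻¹ := by
    intro v hv hv0
    simpa only [abs_of_pos (ht₁ _)] using mul_absNorm_rpow_le_sqrt_euclNormSq K t₁ t₂ hv hv0
  have hdet := det_scalingLinearMap K t₁ t₂
  let τ := ((scalingLinearMap K t₁ t₂).equivOfDetNeZero (hdet ▸ hP.ne')).toContinuousLinearEquiv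
  rw [scaledIdealLattice_eq_comap K t₁ t₂ ha τ (coe_scalingLinearMap K t₁ t₂)] at hmin ⊢
  refine ⟨inferInstance, inferInstance, ?_, hmin⟩
  rw [ZLattice.covolume_comap_symm, covolume_idealLattice]
  change |LinearMap.det (scalingLinearMap K t₁ t₂)| * _ = _
  rw [hdet, abs_of_pos hP, inv_pow, Units.val_mk0]
  ring
end
end
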